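/- arXiv:1701.06760 — 2 statements merged into one kernel-verified Lean document; each statement's English description precedes it below -/
import Mathlib

section
/- Let X be a Poisson random variable with parameter ζ > 0, and let y be a positive integer. Then Σ_{k=y+1}^∞ P(X ≥ k) ≤ ζ · P(X ≥ y). -/
set_option maxHeartbeats 1000000

open scoped NNReal ENNReal
open ProbabilityTheory MeasureTheory

lemma poisson_step (ζ : ℝ≥0) (j : ℕ) :
    (ζ : ℝ≥0∞) * poissonPMF ζ j = (j + 1 : ℕ) * poissonPMF ζ (j + 1) := by
  have h1 : (ζ : ℝ≥0∞) = ENNReal.ofReal (ζ : ℝ) := by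
    simp [ENNReal.ofReal_coe_nnreal]
  have h2 : ((j + 1 : ℕ) : ℝ≥0∞) = ENNReal.ofReal ((j + 1 : ℕ) : ℝ) :=
    (ENNReal.ofReal_natCast _).symm
  have hap : ∀ n : ℕ, poissonPMF ζ n = ENNReal.ofReal (poissonPMFReal ζ n) := fun n => rfl
  rw [hap, hap, h1, h2, ← ENNReal.ofReal_mul (by positivity),
    ← ENNReal.ofReal_mul (by positivity)]
  congr 1
  unfold poissonPMFReal
  rw [Nat.factorial_succ]
  push_cast
  have hfac : ((Nat.factorial j : ℝ)) ≠ 0 := by positivity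
  field_simp
  ring

/-- For `X ~ Poisson(ζ)` and a positive integer `y`,
`∑_{k=y+1}^∞ P(X ≥ k) ≤ ζ · P(X ≥ y)`. -/
theorem poisson_tail_sum_le (ζ : ℝ≥0) (hζ : 0 < ζ) (y : ℕ) (hy : 0 < y) :
    ∑' m : ℕ, (poissonMeasure ζ {j : ℕ | y + 1 + m ≤ j}).toReal
      ≤ (ζ : ℝ) * (poissonMeasure ζ {j : ℕ | y ≤ j}).toReal := by
  set p : ℕ → ℝ≥0∞ := fun j => poissonPMF ζ j with hp
  have hmeas : ∀ (S : Set ℕ), poissonMeasure ζ S = ∑' j, S.indicator p j := by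
    intro S
    rw [poissonMeasure, Measure.sum_apply _ (MeasurableSet.of_discrete)]
    refine tsum_congr fun n => ?_
    rw [Measure.smul_apply, Measure.dirac_apply', smul_eq_mul]
    · by_cases h : n ∈ S
      · simp [Set.indicator, h, hp, ← poissonPMFReal_ofReal_eq_poissonPMF, poissonPMFReal]
      · simp [Set.indicator, h]
    · exact MeasurableSet.of_discrete
  -- key ENNReal inequality
  have key : (∑' m : ℕ, poissonMeasure ζ {j : ℕ | y + 1 + m ≤ j})
      ≤ (ζ : ℝ≥0∞) * poissonMeasure ζ {j : ℕ | y ≤ j} := by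
    -- LHS = ∑' j, (j - y) * p j
    have hL : (∑' m : ℕ, poissonMeasure ζ {j : ℕ | y + 1 + m ≤ j})
        = ∑' j : ℕ, ((j - y : ℕ) : ℝ≥0∞) * p j := by
      simp_rw [hmeas]
      rw [ENNReal.tsum_comm]
      congr 1
      funext j
      have : ∀ m : ℕ, ({j : ℕ | y + 1 + m ≤ j}).indicator p j
          = if m < j - y then p j else 0 := by
        intro m
        have hiff : y + 1 + m ≤ j ↔ m < j - y := by omega
        simp [Set.indicator, hiff]
      simp_rw [this]
      rw [tsum_eq_sum (s := Finset.range (j - y)) (by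
        intro m hm
        simp only [Finset.mem_range, not_lt] at hm
        rw [if_neg (by omega)])]
      rw [Finset.sum_ite_of_true (by intro m hm; simpa using Finset.mem_range.mp hm)]
      simp [mul_comm]
    -- RHS = ∑' k, if y+1 ≤ k then k * p k else 0
    have hR : (ζ : ℝ≥0∞) * poissonMeasure ζ {j : ℕ | y ≤ j}
        = ∑' k : ℕ, if y + 1 ≤ k then (k : ℝ≥0∞) * p k else 0 := by
      rw [hmeas, ← ENNReal.tsum_mul_left,
        tsum_eq_zero_add' (f := fun k : ℕ => if y + 1 ≤ k then (k : ℝ≥0∞) * p k else 0)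
          ENNReal.summable]
      rw [if_neg (by omega), zero_add]
      refine tsum_congr fun j => ?_
      have h1 : (ζ : ℝ≥0∞) * ({j : ℕ | y ≤ j}).indicator p j
          = if y ≤ j then ((j + 1 : ℕ) : ℝ≥0∞) * p (j + 1) else 0 := by
        by_cases h : y ≤ j
        · simp [Set.indicator, h, poisson_step ζ j]
          exact_mod_cast poisson_step ζ j
        · simp [Set.indicator, h]
      rw [h1]
      exact if_congr (by omega) rfl rfl
    rw [hL, hR]
    refine ENNReal.tsum_le_tsum fun j => ?_
    by_cases h : y + 1 ≤ j
    · rw [if_pos h]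
      exact mul_le_mul_left (by exact_mod_cast Nat.cast_le.mpr (Nat.sub_le j y)) _
    · have : j - y = 0 := by omega
      simp [this]
  -- transfer to reals
  have hfin : (ζ : ℝ≥0∞) * poissonMeasure ζ {j : ℕ | y ≤ j} ≠ ⊤ := by
    exact ENNReal.mul_ne_top (by simp) (MeasureTheory.measure_ne_top _ _)
  calc ∑' m : ℕ, (poissonMeasure ζ {j : ℕ | y + 1 + m ≤ j}).toReal
      = (∑' m : ℕ, poissonMeasure ζ {j : ℕ | y + 1 + m ≤ j}).toReal :=
        (ENNReal.tsum_toReal_eq fun _ => MeasureTheory.measure_ne_top _ _).symm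
    _ ≤ ((ζ : ℝ≥0∞) * poissonMeasure ζ {j : ℕ | y ≤ j}).toReal :=
        ENNReal.toReal_mono hfin key
    _ = (ζ : ℝ) * (poissonMeasure ζ {j : ℕ | y ≤ j}).toReal := by
        rw [ENNReal.toReal_mul]; simp
end

section
/- Let p ~ Beta(1, n−1) and, conditionally on p, let X_t be the number of successes in t i.i.d. Bernoulli(p) trials plus 1 (modeling an urn count). Then for n ≤ t, P(X_t/(t+n) > (36/n)·log n) ≤ 2n^{−8}, using the exponential Markov bound E[(1+(e−1)p)^t | p ≤ (16/n)log n] ≤ exp((e−1)t·(16/n)log n). -/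
open MeasureTheory Real

section Aux

noncomputable def densFn (n : ℕ) : ℝ → ℝ := fun x => ((n:ℝ) - 1) * (1 - x) ^ (n - 2)

noncomputable def binFn (t k : ℕ) : ℝ → ℝ := fun x => (t.choose k : ℝ) * x ^ k * (1 - x) ^ (t - k)

lemma densFn_cont (n : ℕ) : Continuous (densFn n) := by unfold densFn; fun_prop

lemma fb_cont (n t k : ℕ) : Continuous (fun x => densFn n x * binFn t k x) := by
  unfold densFn binFn; fun_prop

lemma densFn_nonneg (n : ℕ) (hn : 2 ≤ n) {x : ℝ} (hx : x ∈ Set.Icc (0:ℝ) 1) :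
    0 ≤ densFn n x := by
  obtain ⟨hx0, hx1⟩ := hx
  have : (2:ℝ) ≤ n := by exact_mod_cast hn
  exact mul_nonneg (by linarith) (pow_nonneg (by linarith) _)

lemma binFn_nonneg (t k : ℕ) {x : ℝ} (hx : x ∈ Set.Icc (0:ℝ) 1) :
    0 ≤ binFn t k x := by
  obtain ⟨hx0, hx1⟩ := hx
  exact mul_nonneg (mul_nonneg (Nat.cast_nonneg _) (pow_nonneg hx0 _)) (pow_nonneg (by linarith) _)

lemma fb_nonneg (n t k : ℕ) (hn : 2 ≤ n) {x : ℝ} (hx : x ∈ Set.Icc (0:ℝ) 1) :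
    0 ≤ densFn n x * binFn t k x :=
  mul_nonneg (densFn_nonneg n hn hx) (binFn_nonneg t k hx)

lemma sum_b_le (t : ℕ) (x c : ℝ) (hx : 0 ≤ x) (hx1 : x ≤ 1) (hc : 0 ≤ c)
    (F : Finset ℕ) :
    ∑ k ∈ F, (t.choose k : ℝ) * (c * x) ^ k * (1 - x) ^ (t - k)
      ≤ (c * x + (1 - x)) ^ t := by
  have hnn : ∀ k, (0:ℝ) ≤ (t.choose k : ℝ) * (c * x) ^ k * (1 - x) ^ (t - k) := by
    intro k
    have h1 : (0:ℝ) ≤ 1 - x := by linarith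
    positivity
  calc ∑ k ∈ F, (t.choose k : ℝ) * (c * x) ^ k * (1 - x) ^ (t - k)
      ≤ ∑ k ∈ F ∪ Finset.range (t+1), (t.choose k : ℝ) * (c * x) ^ k * (1 - x) ^ (t - k) :=
        Finset.sum_le_sum_of_subset_of_nonneg Finset.subset_union_left (fun k _ _ => hnn k)
    _ = ∑ k ∈ Finset.range (t+1), (t.choose k : ℝ) * (c * x) ^ k * (1 - x) ^ (t - k) := by
        refine (Finset.sum_subset Finset.subset_union_right ?_).symm
        intro k _ hk
        have : t < k := by simpa using hk
        simp [Nat.choose_eq_zero_of_lt this]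
    _ = (c * x + (1 - x)) ^ t := by
        rw [add_pow]
        exact Finset.sum_congr rfl (fun k _ => by ring)

lemma pointwise_A (t : ℕ) (x fx : ℝ) (hx : 0 ≤ x) (hx1 : x ≤ 1) (hfx : 0 ≤ fx)
    (F : Finset ℕ) :
    ∑ k ∈ F, fx * ((t.choose k : ℝ) * x ^ k * (1 - x) ^ (t - k)) ≤ fx := by
  rw [← Finset.mul_sum]
  have h := sum_b_le t x 1 hx hx1 zero_le_one F
  have h1 : (1*x + (1-x)) = 1 := by ring
  rw [h1, one_pow] at h
  simp only [one_mul] at h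
  calc fx * ∑ k ∈ F, (t.choose k : ℝ) * x ^ k * (1 - x) ^ (t - k)
      ≤ fx * 1 := mul_le_mul_of_nonneg_left h hfx
    _ = fx := mul_one fx

lemma pointwise_B (t : ℕ) (m aa x fx : ℝ) (hx : 0 ≤ x) (hx1 : x ≤ 1) (hxa : x ≤ aa)
    (hfx : 0 ≤ fx) (F : Finset ℕ) :
    ∑ k ∈ F, Real.exp ((k:ℝ) + 1 - m) * (fx * ((t.choose k : ℝ) * x ^ k * (1 - x) ^ (t - k)))
      ≤ Real.exp (1 - m + (Real.exp 1 - 1) * aa * t) * fx := by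
  have he1 : (1:ℝ) ≤ Real.exp 1 := by linarith [Real.add_one_le_exp 1, Real.add_one_le_exp (0:ℝ)]
  have ht0 : (0:ℝ) ≤ t := Nat.cast_nonneg t
  have step1 : ∑ k ∈ F, Real.exp ((k:ℝ) + 1 - m)
        * (fx * ((t.choose k : ℝ) * x ^ k * (1 - x) ^ (t - k)))
      = Real.exp (1 - m) * fx
        * ∑ k ∈ F, (t.choose k : ℝ) * (Real.exp 1 * x) ^ k * (1 - x) ^ (t - k) := by
    rw [Finset.mul_sum]
    refine Finset.sum_congr rfl (fun k _ => ?_)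
    have hek : Real.exp ((k:ℝ) + 1 - m) = Real.exp (1 - m) * Real.exp 1 ^ k := by
      rw [← Real.exp_nat_mul, ← Real.exp_add]
      congr 1
      ring
    rw [hek, mul_pow]
    ring
  rw [step1]
  have step2 : ∑ k ∈ F, (t.choose k : ℝ) * (Real.exp 1 * x) ^ k * (1 - x) ^ (t - k)
      ≤ Real.exp ((Real.exp 1 - 1) * aa * t) := by
    have h := sum_b_le t x (Real.exp 1) hx hx1 (Real.exp_pos 1).le F
    refine h.trans ?_
    have hbase0 : (0:ℝ) ≤ Real.exp 1 * x + (1 - x) := by nlinarith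
    have h2 : Real.exp 1 * x + (1 - x) ≤ Real.exp ((Real.exp 1 - 1) * x) := by
      have := Real.add_one_le_exp ((Real.exp 1 - 1) * x)
      linarith
    calc (Real.exp 1 * x + (1 - x)) ^ t
        ≤ Real.exp ((Real.exp 1 - 1) * x) ^ t := pow_le_pow_left₀ hbase0 h2 t
      _ = Real.exp ((Real.exp 1 - 1) * x * t) := by
          rw [← Real.exp_nat_mul]; congr 1; ring
      _ ≤ Real.exp ((Real.exp 1 - 1) * aa * t) := by
          apply Real.exp_le_exp.mpr
          have h5 : (Real.exp 1 - 1) * x ≤ (Real.exp 1 - 1) * aa :=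
            mul_le_mul_of_nonneg_left hxa (by linarith)
          exact mul_le_mul_of_nonneg_right h5 ht0
  calc Real.exp (1 - m) * fx
        * ∑ k ∈ F, (t.choose k : ℝ) * (Real.exp 1 * x) ^ k * (1 - x) ^ (t - k)
      ≤ Real.exp (1 - m) * fx * Real.exp ((Real.exp 1 - 1) * aa * t) :=
        mul_le_mul_of_nonneg_left step2 (by positivity)
    _ = Real.exp (1 - m + (Real.exp 1 - 1) * aa * t) * fx := by
        rw [Real.exp_add]; ring

lemma int_pow_sub (j : ℕ) (a : ℝ) :
    ∫ x in a..1, (1 - x) ^ j = (1 - a) ^ (j + 1) / (j + 1) := by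
  have := intervalIntegral.integral_comp_sub_left (fun y : ℝ => y ^ j) 1 (a := a) (b := 1)
  rw [this, integral_pow]
  norm_num

lemma int_tail (n : ℕ) (hn : 2 ≤ n) (a : ℝ) (ha : a ≤ 1) :
    ∫ x in Set.Ioc a 1, densFn n x = (1 - a) ^ (n - 1) := by
  unfold densFn
  rw [← intervalIntegral.integral_of_le ha, intervalIntegral.integral_const_mul, int_pow_sub]
  have h1 : ((n - 2 : ℕ) : ℝ) + 1 = (n : ℝ) - 1 := by
    push_cast [Nat.cast_sub hn]
    ring
  have h2 : (n - 2) + 1 = n - 1 := by omega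
  rw [h1, h2]
  have hne : (n : ℝ) - 1 ≠ 0 := by
    have : (2:ℝ) ≤ n := by exact_mod_cast hn
    intro h; linarith
  field_simp

lemma int_full (n : ℕ) (hn : 2 ≤ n) :
    ∫ x in Set.Icc (0:ℝ) 1, densFn n x = 1 := by
  rw [integral_Icc_eq_integral_Ioc, int_tail n hn 0 (by norm_num)]
  simp

lemma exp_neg_eight_log (n : ℕ) (hn : 2 ≤ n) :
    Real.exp (-(8 * Real.log n)) = (n:ℝ) ^ (-8 : ℤ) := by
  have h0 : (0:ℝ) < n := by positivity
  have h8 : (8:ℝ) * Real.log n = ((8:ℕ):ℝ) * Real.log n := by norm_num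
  rw [Real.exp_neg, h8, Real.exp_nat_mul, Real.exp_log h0]
  rw [zpow_neg, zpow_ofNat]

lemma intA (n : ℕ) (hn : 2 ≤ n) (a : ℝ) (ha0 : 0 ≤ a)
    (ha8 : 8 * Real.log n ≤ a * ((n:ℝ) - 1)) :
    ∫ x in Set.Ioi a ∩ Set.Icc 0 1, densFn n x ≤ (n:ℝ) ^ (-8 : ℤ) := by
  have h0 : (0:ℝ) < n := by positivity
  have hpos : (0:ℝ) < (n:ℝ) ^ (-8 : ℤ) := by positivity
  rcases le_or_gt 1 a with h1 | h1
  · have hempty : Set.Ioi a ∩ Set.Icc (0:ℝ) 1 = ∅ := by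
      ext x
      simp only [Set.mem_inter_iff, Set.mem_Ioi, Set.mem_Icc, Set.mem_empty_iff_false, iff_false]
      rintro ⟨hx, _, hx1⟩
      linarith
    rw [hempty]
    simpa using hpos.le
  · have hset : Set.Ioi a ∩ Set.Icc (0:ℝ) 1 = Set.Ioc a 1 := by
      ext x
      simp only [Set.mem_inter_iff, Set.mem_Ioi, Set.mem_Icc, Set.mem_Ioc]
      constructor
      · rintro ⟨hx, _, hx1⟩; exact ⟨hx, hx1⟩
      · rintro ⟨hx, hx1⟩; exact ⟨hx, by linarith, hx1⟩
    rw [hset, int_tail n hn a h1.le]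
    have hstep : (1 - a) ^ (n - 1) ≤ Real.exp (-a) ^ (n - 1) := by
      apply pow_le_pow_left₀ (by linarith)
      linarith [Real.add_one_le_exp (-a)]
    have hexp : Real.exp (-a) ^ (n - 1) = Real.exp (-(a * ((n:ℝ) - 1))) := by
      rw [← Real.exp_nat_mul]
      congr 1
      push_cast [Nat.cast_sub (by omega : 1 ≤ n)]
      ring
    calc (1 - a) ^ (n - 1) ≤ Real.exp (-(a * ((n:ℝ) - 1))) := by rw [← hexp]; exact hstep
      _ ≤ Real.exp (-(8 * Real.log n)) := Real.exp_le_exp.mpr (by linarith)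
      _ = (n:ℝ) ^ (-8 : ℤ) := exp_neg_eight_log n hn

lemma exponent_ineq (n t : ℕ) (hn : 2 ≤ n) (hnt : n ≤ t) :
    1 - 36 / (n:ℝ) * Real.log n * ((t:ℝ) + n)
      + (Real.exp 1 - 1) * (16 * Real.log n / n) * t ≤ -(8 * Real.log n) := by
  have hnR : (2:ℝ) ≤ n := by exact_mod_cast hn
  have h0 : (0:ℝ) < n := by linarith
  have htR : (n:ℝ) ≤ t := by exact_mod_cast hnt
  set L := Real.log n with hL_def
  set u := (t:ℝ) / n with hu_def
  have hu : 1 ≤ u := (one_le_div h0).mpr htR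
  have hL2 : Real.log 2 ≤ L := Real.log_le_log (by norm_num) hnR
  have hL2' : (0.6931471803 : ℝ) < Real.log 2 := Real.log_two_gt_d9
  have hL : 0 < L := lt_trans (by norm_num) (lt_of_lt_of_le hL2' hL2)
  have he : Real.exp 1 < 2.7182818286 := Real.exp_one_lt_d9
  have hun : u * (n:ℝ) = t := div_mul_cancel₀ _ h0.ne'
  have hrw1 : 36 / (n:ℝ) * L * ((t:ℝ) + n) = 36 * L * (u + 1) := by
    rw [hu_def]
    field_simp
  have hrw2 : (Real.exp 1 - 1) * (16 * L / n) * t = 16 * (Real.exp 1 - 1) * L * u := by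
    rw [hu_def]
    field_simp
  rw [hrw1, hrw2]
  nlinarith [mul_nonneg hL.le (sub_nonneg.mpr hu),
    mul_nonneg (mul_nonneg hL.le (sub_nonneg.mpr hu)) (sub_nonneg.mpr he.le)]

end Aux
/-- Let `p ~ Beta(1, n−1)` and, conditionally on `p`, let `X − 1 ~ Binomial(t, p)`.
Then for `n ≤ t` (and `n ≥ 2`), `P(X/(t+n) > (36/n)·log n) ≤ 2 n^{−8}`. -/
theorem beta_binomial_ratio_tail {Ω : Type*} [MeasurableSpace Ω] (μ : Measure Ω)
    [IsProbabilityMeasure μ] (n t : ℕ) (hn : 2 ≤ n) (hnt : n ≤ t)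
    (p : Ω → ℝ) (X : Ω → ℕ) (hp : Measurable p) (hX : Measurable X)
    (hjoint : ∀ (k : ℕ) (s : Set ℝ), MeasurableSet s →
      μ {ω | p ω ∈ s ∧ X ω = k + 1}
        = ENNReal.ofReal (∫ x in s ∩ Set.Icc 0 1,
            ((n : ℝ) - 1) * (1 - x) ^ (n - 2)
              * ((t.choose k : ℝ) * x ^ k * (1 - x) ^ (t - k)))) :
    μ {ω | (36 / (n : ℝ)) * Real.log n < (X ω : ℝ) / ((t : ℝ) + n)}
      ≤ ENNReal.ofReal (2 * (n : ℝ) ^ (-8 : ℤ)) := by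
  classical
  have hjoint' : ∀ (k : ℕ) (s : Set ℝ), MeasurableSet s →
      μ {ω | p ω ∈ s ∧ X ω = k + 1}
        = ENNReal.ofReal (∫ x in s ∩ Set.Icc 0 1, densFn n x * binFn t k x) := by
    intro k s hs
    exact hjoint k s hs
  have hnR : (2:ℝ) ≤ n := by exact_mod_cast hn
  have h0 : (0:ℝ) < n := by linarith
  have hlog : 0 < Real.log n := Real.log_pos (by exact_mod_cast hn)
  have htn : (0:ℝ) < (t:ℝ) + n := by positivity
  set a : ℝ := 16 * Real.log n / n with ha_def
  set m : ℝ := 36 / (n:ℝ) * Real.log n * ((t:ℝ) + n) with hm_def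
  have ha0 : 0 < a := by rw [ha_def]; positivity
  set SA : Set ℝ := Set.Ioi a ∩ Set.Icc 0 1 with hSA_def
  set SB : Set ℝ := Set.Iic a ∩ Set.Icc 0 1 with hSB_def
  have hSAm : MeasurableSet SA := measurableSet_Ioi.inter measurableSet_Icc
  have hSBm : MeasurableSet SB := measurableSet_Iic.inter measurableSet_Icc
  have hSAsub : SA ⊆ Set.Icc (0:ℝ) 1 := Set.inter_subset_right
  have hSBsub : SB ⊆ Set.Icc (0:ℝ) 1 := Set.inter_subset_right
  have hIntOn : ∀ {g : ℝ → ℝ}, Continuous g → ∀ {S : Set ℝ}, S ⊆ Set.Icc (0:ℝ) 1 →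
      IntegrableOn g S := by
    intro g hg S hS
    exact (hg.integrableOn_Icc).mono_set hS
  have hsub : {ω | (36 / (n : ℝ)) * Real.log n < (X ω : ℝ) / ((t : ℝ) + n)}
      ⊆ (⋃ k : ℕ, {ω | p ω ∈ Set.Ioi a ∧ X ω = k + 1})
        ∪ ⋃ k : ℕ, (if m < (k:ℝ) + 1 then {ω | p ω ∈ Set.Iic a ∧ X ω = k + 1} else ∅) := by
    intro ω hω
    simp only [Set.mem_setOf_eq] at hω
    have hXpos : 0 < X ω := by
      rcases Nat.eq_zero_or_pos (X ω) with h | h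
      · exfalso
        rw [h] at hω
        simp only [Nat.cast_zero, zero_div] at hω
        have : 0 < 36 / (n:ℝ) * Real.log n := by positivity
        linarith
      · exact h
    obtain ⟨k, hk⟩ : ∃ k, X ω = k + 1 := ⟨X ω - 1, (Nat.succ_pred_eq_of_pos hXpos).symm⟩
    have hmk : m < (k:ℝ) + 1 := by
      have h1 := (lt_div_iff₀ htn).mp hω
      rw [hm_def]
      rw [hk] at h1
      push_cast at h1
      linarith
    rcases le_or_gt (p ω) a with hpa | hpa
    · right
      refine Set.mem_iUnion.mpr ⟨k, ?_⟩
      rw [if_pos hmk]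
      exact ⟨hpa, hk⟩
    · left
      exact Set.mem_iUnion.mpr ⟨k, ⟨hpa, hk⟩⟩
  refine le_trans (measure_mono hsub) (le_trans (measure_union_le _ _) ?_)
  have ha8 : 8 * Real.log n ≤ a * ((n:ℝ) - 1) := by
    rw [ha_def, div_mul_eq_mul_div, le_div_iff₀ h0]
    nlinarith [hlog.le]
  have hA : μ (⋃ k : ℕ, {ω | p ω ∈ Set.Ioi a ∧ X ω = k + 1})
      ≤ ENNReal.ofReal ((n:ℝ) ^ (-8 : ℤ)) := by
    refine le_trans (measure_iUnion_le _) ?_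
    have hμ : ∀ k : ℕ, μ {ω | p ω ∈ Set.Ioi a ∧ X ω = k + 1}
        = ENNReal.ofReal (∫ x in SA, densFn n x * binFn t k x) := fun k =>
      hjoint' k _ measurableSet_Ioi
    rw [tsum_congr hμ, ENNReal.tsum_eq_iSup_sum]
    refine iSup_le fun F => ?_
    have hnn : ∀ k ∈ F, 0 ≤ ∫ x in SA, densFn n x * binFn t k x := fun k _ =>
      setIntegral_nonneg hSAm (fun x hx => fb_nonneg n t k hn (hSAsub hx))
    rw [← ENNReal.ofReal_sum_of_nonneg hnn]
    apply ENNReal.ofReal_le_ofReal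
    rw [← integral_finset_sum F (fun k _ => hIntOn (fb_cont n t k) hSAsub)]
    calc ∫ x in SA, ∑ k ∈ F, densFn n x * binFn t k x
        ≤ ∫ x in SA, densFn n x := by
          apply setIntegral_mono_on
          · exact integrable_finset_sum F (fun k _ => hIntOn (fb_cont n t k) hSAsub)
          · exact hIntOn (densFn_cont n) hSAsub
          · exact hSAm
          · intro x hx
            have hx' := hSAsub hx
            exact pointwise_A t x (densFn n x) hx'.1 hx'.2 (densFn_nonneg n hn hx') F
      _ ≤ (n:ℝ) ^ (-8 : ℤ) := intA n hn a ha0.le ha8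
  set C : ℝ := Real.exp (1 - m + (Real.exp 1 - 1) * a * t) with hC_def
  have hB : μ (⋃ k : ℕ, (if m < (k:ℝ) + 1 then {ω | p ω ∈ Set.Iic a ∧ X ω = k + 1} else ∅))
      ≤ ENNReal.ofReal ((n:ℝ) ^ (-8 : ℤ)) := by
    refine le_trans (measure_iUnion_le _) ?_
    have hμ : ∀ k : ℕ,
        μ (if m < (k:ℝ) + 1 then {ω | p ω ∈ Set.Iic a ∧ X ω = k + 1} else ∅)
        ≤ ENNReal.ofReal (∫ x in SB,
            Real.exp ((k:ℝ) + 1 - m) * (densFn n x * binFn t k x)) := by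
      intro k
      by_cases hk : m < (k:ℝ) + 1
      · rw [if_pos hk, hjoint' k _ measurableSet_Iic]
        apply ENNReal.ofReal_le_ofReal
        apply setIntegral_mono_on (hIntOn (fb_cont n t k) hSBsub)
            (hIntOn (continuous_const.mul (fb_cont n t k)) hSBsub) hSBm
        intro x hx
        have h1 : 1 ≤ Real.exp ((k:ℝ) + 1 - m) := by
          have h := Real.add_one_le_exp ((k:ℝ) + 1 - m)
          linarith
        exact le_mul_of_one_le_left (fb_nonneg n t k hn (hSBsub hx)) h1
      · rw [if_neg hk]
        simp
    refine le_trans (ENNReal.tsum_le_tsum hμ) ?_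
    rw [ENNReal.tsum_eq_iSup_sum]
    refine iSup_le fun F => ?_
    have hnn : ∀ k ∈ F, 0 ≤ ∫ x in SB,
        Real.exp ((k:ℝ) + 1 - m) * (densFn n x * binFn t k x) :=
      fun k _ => setIntegral_nonneg hSBm
        (fun x hx => mul_nonneg (Real.exp_pos _).le (fb_nonneg n t k hn (hSBsub hx)))
    rw [← ENNReal.ofReal_sum_of_nonneg hnn]
    apply ENNReal.ofReal_le_ofReal
    rw [← integral_finset_sum F (fun k _ =>
      hIntOn (g := fun x => Real.exp ((k:ℝ) + 1 - m) * (densFn n x * binFn t k x))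
        (continuous_const.mul (fb_cont n t k)) hSBsub)]
    calc ∫ x in SB, ∑ k ∈ F, Real.exp ((k:ℝ) + 1 - m) * (densFn n x * binFn t k x)
        ≤ ∫ x in SB, C * densFn n x := by
          apply setIntegral_mono_on
          · exact integrable_finset_sum F (fun k _ =>
              hIntOn (continuous_const.mul (fb_cont n t k)) hSBsub)
          · exact hIntOn (continuous_const.mul (densFn_cont n)) hSBsub
          · exact hSBm
          · intro x hx
            have hx1 : x ∈ Set.Icc (0:ℝ) 1 := hSBsub hx
            have hxa : x ≤ a := hx.1
            exact pointwise_B t m a x (densFn n x) hx1.1 hx1.2 hxa (densFn_nonneg n hn hx1) F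
      _ ≤ ∫ x in Set.Icc (0:ℝ) 1, C * densFn n x := by
          apply setIntegral_mono_set
            (hIntOn (continuous_const.mul (densFn_cont n)) Set.Subset.rfl)
          · exact (ae_restrict_iff' measurableSet_Icc).mpr (Filter.Eventually.of_forall
              (fun x hx => mul_nonneg (Real.exp_pos _).le (densFn_nonneg n hn hx)))
          · exact HasSubset.Subset.eventuallyLE hSBsub
      _ = C := by rw [integral_const_mul, int_full n hn, mul_one]
      _ ≤ (n:ℝ) ^ (-8 : ℤ) := by
          rw [← exp_neg_eight_log n hn]
          exact Real.exp_le_exp.mpr (exponent_ineq n t hn hnt)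
  refine le_trans (add_le_add hA hB) ?_
  rw [← ENNReal.ofReal_add (by positivity) (by positivity)]
  apply ENNReal.ofReal_le_ofReal
  nlinarith [zpow_pos (show (0:ℝ) < n by positivity) (-8 : ℤ)]
end
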